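/- For each open content type θ there is a ShEx shape φ_θ such that for every common graph G = (E,ρ) and every node v ∈ Nodes(G): G,v ⊨ φ_θ if and only if ρ(v) ∈ ⟦θ⟧. -/

import Mathlib

/-! ### Common graphs -/

/-- Nodes. -/
abbrev GNode := ℕ
/-- Values. -/
abbrev GValue := ℕ
/-- Predicates. -/
abbrev GPred := ℕ
/-- Keys. -/
abbrev GKey := ℕ

/-- Nodes or values (the disjoint union 𝒩 ∪ 𝒱). -/
abbrev NV := GNode ⊕ GValue
/-- Predicates or keys (the disjoint union 𝒫 ∪ 𝒦). -/
abbrev PK := GPred ⊕ GKey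

/-- Triples of a common graph: edges (𝒩×𝒫×𝒩) and properties (𝒩×𝒦×𝒱). -/
inductive Triple : Type
  | edge (u : GNode) (p : GPred) (v : GNode)
  | prop (u : GNode) (k : GKey) (w : GValue)
  deriving DecidableEq

/-- A common graph: a finite set of triples such that for each node `u` and key `k`
there is at most one value `w` with `(u,k,w)` in the graph. -/
structure CommonGraph : Type where
  triples : Finset Triple
  functional : ∀ u k w w', Triple.prop u k w ∈ triples → Triple.prop u k w' ∈ triples → w = w'

/-- `(v, q, u) ∈ G`, viewed as a binary relation on `𝒩 ∪ 𝒱` for each `q ∈ 𝒫 ∪ 𝒦`. -/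
def tripleRel (G : CommonGraph) : PK → NV → NV → Prop
  | Sum.inl p, Sum.inl u, Sum.inl v => Triple.edge u p v ∈ G.triples
  | Sum.inr k, Sum.inl u, Sum.inr w => Triple.prop u k w ∈ G.triples
  | _, _, _ => False

/-- The nodes occurring in a common graph. -/
def nodesSet (G : CommonGraph) : Set GNode :=
  {u | (∃ p v, Triple.edge u p v ∈ G.triples) ∨ (∃ p v, Triple.edge v p u ∈ G.triples) ∨
       (∃ k w, Triple.prop u k w ∈ G.triples)}

/-- The values occurring in a common graph. -/
def valuesSet (G : CommonGraph) : Set GValue :=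
  {w | ∃ u k, Triple.prop u k w ∈ G.triples}

/-- `v ∈ Nodes(G) ∪ Values(G)`. -/
def inGraph (G : CommonGraph) : NV → Prop
  | Sum.inl u => u ∈ nodesSet G
  | Sum.inr w => w ∈ valuesSet G

/-- The content `ρ(u)` of a node: the record `{(k,w) | ρ(u,k) = w}`. -/
def content (G : CommonGraph) (u : GNode) : Set (GKey × GValue) :=
  {kw | Triple.prop u kw.1 kw.2 ∈ G.triples}

/-! ### Records and content types -/

/-- A record: a functional, finite set of key–value pairs
(a finite-domain partial function `𝒦 ⇀ 𝒱`). -/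
def IsRecord (r : Set (GKey × GValue)) : Prop :=
  r.Finite ∧ ∀ k w w', (k, w) ∈ r → (k, w') ∈ r → w = w'

/-- Content types `θ ::= ⊤ | {} | {k:τ} | θ&θ | θ|θ`. -/
inductive CType (VT : Type) : Type
  | top
  | emp
  | single (k : GKey) (τ : VT)
  | band (θ₁ θ₂ : CType VT)
  | bor (θ₁ θ₂ : CType VT)

/-- The semantics `⟦θ⟧` of a content type: a set of records. -/
def ctSem {VT : Type} (semVT : VT → Set GValue) : CType VT → Set (Set (GKey × GValue))
  | .top => {r | IsRecord r}
  | .emp => {(∅ : Set (GKey × GValue))}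
  | .single k τ => {r | ∃ w ∈ semVT τ, r = {(k, w)}}
  | .band θ₁ θ₂ => {r | IsRecord r ∧ ∃ r₁ ∈ ctSem semVT θ₁, ∃ r₂ ∈ ctSem semVT θ₂, r = r₁ ∪ r₂}
  | .bor θ₁ θ₂ => ctSem semVT θ₁ ∪ ctSem semVT θ₂

/-- Closed content types `ν ::= {} | {k:τ} | ν&ν | ν|ν`. -/
inductive CCType (VT : Type) : Type
  | emp
  | single (k : GKey) (τ : VT)
  | band (ν₁ ν₂ : CCType VT)
  | bor (ν₁ ν₂ : CCType VT)

/-- A closed content type is in particular a content type. -/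
def CCType.toCT {VT : Type} : CCType VT → CType VT
  | .emp => .emp
  | .single k τ => .single k τ
  | .band ν₁ ν₂ => .band ν₁.toCT ν₂.toCT
  | .bor ν₁ ν₂ => .bor ν₁.toCT ν₂.toCT

/-- Open content types: `⊤` or `ν & ⊤` with `ν` closed. -/
inductive OpenCT (VT : Type) : Type
  | top
  | opn (ν : CCType VT)

/-- An open content type as a content type. -/
def OpenCT.toCT {VT : Type} : OpenCT VT → CType VT
  | .top => .top
  | .opn ν => .band ν.toCT .top

/-! ### ShEx -/

/-- Possibly marked triples `(v, q, v')` / `(v, q⁻, v')` (with `inv = true` for marked). -/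
structure STriple : Type where
  src : NV
  sym : PK
  inv : Bool
  tgt : NV
  deriving DecidableEq

/-- Well-typedness of a possibly marked triple, i.e. membership in `ℰ ∪ ℰ⁻` where
`ℰ = 𝒩×𝒫×𝒩 ∪ 𝒩×𝒦×𝒱` and `ℰ⁻ = 𝒩×𝒫⁻×𝒩 ∪ 𝒱×𝒦⁻×𝒩`. -/
def STriple.wellTyped : STriple → Prop
  | ⟨a, Sum.inl _, false, b⟩ => (∃ u, a = Sum.inl u) ∧ (∃ v, b = Sum.inl v)
  | ⟨a, Sum.inr _, false, b⟩ => (∃ u, a = Sum.inl u) ∧ (∃ w, b = Sum.inr w)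
  | ⟨a, Sum.inl _, true, b⟩ => (∃ u, a = Sum.inl u) ∧ (∃ v, b = Sum.inl v)
  | ⟨a, Sum.inr _, true, b⟩ => (∃ w, a = Sum.inr w) ∧ (∃ v, b = Sum.inl v)

/-- The signed neighbourhood `Neigh±_G(v)`. -/
def neighPM (G : CommonGraph) (v : NV) : Set STriple :=
  {t | (t.inv = false ∧ t.src = v ∧ tripleRel G t.sym v t.tgt) ∨
       (t.inv = true ∧ t.src = v ∧ tripleRel G t.sym t.tgt v)}

mutual
/-- ShEx shapes. -/
inductive ShExShape (VT : Type) : Type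
  | testC (c : GValue)
  | testT (τ : VT)
  /-- the half-open form `⟨e ; (¬R⁻)*⟩` -/
  | neighHalf (e : TExpr VT) (R : Finset PK)
  /-- the open form `⟨e ; (¬R⁻)* ; (¬Q)*⟩` -/
  | neighOpen (e : TExpr VT) (R : Finset PK) (Q : Finset PK)
  | and (φ₁ φ₂ : ShExShape VT)
  | or (φ₁ φ₂ : ShExShape VT)
  | not (φ : ShExShape VT)

/-- ShEx closed triple expressions. -/
inductive TExpr (VT : Type) : Type
  | eps
  | fwd (q : PK) (φ : ShExShape VT)
  | bwd (q : PK) (φ : ShExShape VT)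
  | seq (e₁ e₂ : TExpr VT)
  | alt (e₁ e₂ : TExpr VT)
  | star (e : TExpr VT)
end

/-- `⟦e₁ ; e₂⟧`: disjoint unions. -/
def seqSem (A B : Set (Set STriple)) : Set (Set STriple) :=
  {T | ∃ T₁ ∈ A, ∃ T₂ ∈ B, T₁ ∩ T₂ = ∅ ∧ T = T₁ ∪ T₂}

/-- `⟦e*⟧`: finite unions of pairwise disjoint members (the empty union included). -/
def starSem (A : Set (Set STriple)) : Set (Set STriple) :=
  {T | ∃ l : List (Set STriple), (∀ X ∈ l, X ∈ A) ∧
        l.Pairwise (fun X Y => X ∩ Y = ∅) ∧ T = l.foldr (· ∪ ·) ∅}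

/-- `⟦¬Q⟧` (for `b = false`) resp. `⟦¬Q⁻⟧` (for `b = true`) at focus `v`:
all singletons of (well-typed) unmarked resp. marked triples with symbol outside `Q`. -/
def negSem (v : NV) (Q : Finset PK) (b : Bool) : Set (Set STriple) :=
  {T | ∃ t : STriple, t.wellTyped ∧ t.src = v ∧ t.inv = b ∧ t.sym ∉ Q ∧ T = {t}}

mutual
/-- Satisfaction of ShEx shapes: `G, v ⊨ φ`. -/
def shexSat {VT : Type} (semVT : VT → Set GValue) (G : CommonGraph) : NV → ShExShape VT → Prop
  | v, .testC c => v = Sum.inr c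
  | v, .testT τ => ∃ w, v = Sum.inr w ∧ w ∈ semVT τ
  | v, .neighHalf e R =>
      neighPM G v ∈ seqSem (teSem semVT G v e) (starSem (negSem v R true))
  | v, .neighOpen e R Q =>
      neighPM G v ∈
        seqSem (seqSem (teSem semVT G v e) (starSem (negSem v R true))) (starSem (negSem v Q false))
  | v, .and φ₁ φ₂ => shexSat semVT G v φ₁ ∧ shexSat semVT G v φ₂
  | v, .or φ₁ φ₂ => shexSat semVT G v φ₁ ∨ shexSat semVT G v φ₂
  | v, .not φ => ¬ shexSat semVT G v φ

/-- The semantics `⟦e⟧_v^G` of closed triple expressions. -/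
def teSem {VT : Type} (semVT : VT → Set GValue) (G : CommonGraph) : NV → TExpr VT → Set (Set STriple)
  | _, .eps => {(∅ : Set STriple)}
  | v, .fwd q φ =>
      {T | ∃ t : STriple, t.wellTyped ∧ t.src = v ∧ t.sym = q ∧ t.inv = false ∧
            shexSat semVT G t.tgt φ ∧ T = {t}}
  | v, .bwd q φ =>
      {T | ∃ t : STriple, t.wellTyped ∧ t.src = v ∧ t.sym = q ∧ t.inv = true ∧
            shexSat semVT G t.tgt φ ∧ T = {t}}
  | v, .seq e₁ e₂ => seqSem (teSem semVT G v e₁) (teSem semVT G v e₂)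
  | v, .alt e₁ e₂ => teSem semVT G v e₁ ∪ teSem semVT G v e₂
  | v, .star e => starSem (teSem semVT G v e)
end

/-- The open triple expression `⊤ = ε ; (¬∅⁻)* ; (¬∅)*` as a shape. -/
def shexTop {VT : Type} : ShExShape VT := .neighOpen .eps ∅ ∅

/-- ShEx selectors: `test(c)`, `⟨q.test(c) ; ⊤⟩`, `⟨q.⟨⊤⟩ ; ⊤⟩`, `⟨q⁻.⟨⊤⟩ ; ⊤⟩`. -/
def IsShExSelector {VT : Type} (φ : ShExShape VT) : Prop :=
  (∃ c, φ = ShExShape.testC c) ∨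
  (∃ q c, φ = ShExShape.neighOpen (TExpr.fwd q (ShExShape.testC c)) ∅ ∅) ∨
  (∃ q, φ = ShExShape.neighOpen (TExpr.fwd q shexTop) ∅ ∅) ∨
  (∃ q, φ = ShExShape.neighOpen (TExpr.bwd q shexTop) ∅ ∅)

/-- A ShEx schema: a finite set of selector–shape pairs. -/
structure ShExSchema (VT : Type) : Type where
  pairs : Finset (ShExShape VT × ShExShape VT)
  sel : ∀ pr ∈ pairs, IsShExSelector pr.1

/-- Validity of a common graph w.r.t. a ShEx schema. -/
def shexValid {VT : Type} (semVT : VT → Set GValue) (S : ShExSchema VT) (G : CommonGraph) : Prop :=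
  ∀ v : NV, ∀ pr ∈ S.pairs, shexSat semVT G v pr.1 → shexSat semVT G v pr.2

/-! ### Auxiliary lemmas -/

lemma isRecord_subset {r s : Set (GKey × GValue)} (hr : IsRecord r) (hs : s ⊆ r) :
    IsRecord s :=
  ⟨hr.1.subset hs, fun k w w' h1 h2 => hr.2 k w w' (hs h1) (hs h2)⟩

lemma content_isRecord (G : CommonGraph) (u : GNode) : IsRecord (content G u) := by
  constructor
  · apply Set.Finite.subset (Set.Finite.image
      (f := fun tr => match tr with | Triple.prop _ k w => (k, w) | _ => (0, 0))
      G.triples.finite_toSet)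
    intro kw hkw
    exact ⟨Triple.prop u kw.1 kw.2, hkw, rfl⟩
  · intro k w w' h1 h2; exact G.functional u k w w' h1 h2

/-- Reconstruct a signed triple from an underlying graph triple. -/
def trOf (b : Bool) : Triple → STriple
  | Triple.edge u p w => if b then ⟨Sum.inl w, Sum.inl p, true, Sum.inl u⟩
      else ⟨Sum.inl u, Sum.inl p, false, Sum.inl w⟩
  | Triple.prop u k w => if b then ⟨Sum.inr w, Sum.inr k, true, Sum.inl u⟩
      else ⟨Sum.inl u, Sum.inr k, false, Sum.inr w⟩

lemma neighPM_finite (G : CommonGraph) (v : NV) : (neighPM G v).Finite := by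
  apply Set.Finite.subset
    ((G.triples.finite_toSet.image (trOf true)).union (G.triples.finite_toSet.image (trOf false)))
  rintro ⟨a, q, b, c⟩ (⟨hb, hsrc, hrel⟩ | ⟨hb, hsrc, hrel⟩) <;>
    simp only at hb hsrc <;> subst hb <;> subst hsrc <;>
      rcases q with p | k <;> rcases a with u | w <;> rcases c with u' | w' <;>
        simp [tripleRel] at hrel <;> simp [trOf] <;>
          first
          | exact Or.inr ⟨_, hrel, rfl⟩
          | exact Or.inl ⟨_, hrel, rfl⟩

lemma neighPM_spec {G : CommonGraph} {v : NV} {t : STriple} (h : t ∈ neighPM G v) :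
    t.wellTyped ∧ t.src = v := by
  obtain ⟨a, q, b, c⟩ := t
  rcases h with ⟨hb, hsrc, hrel⟩ | ⟨hb, hsrc, hrel⟩ <;>
    simp only at hb hsrc <;> subst hb <;> subst hsrc <;>
      rcases q with p | k <;> rcases a with u | w <;> rcases c with u' | w' <;>
        simp [tripleRel] at hrel <;> simp [STriple.wellTyped]

lemma subset_foldr {l : List (Set STriple)} {X : Set STriple} (hX : X ∈ l) :
    X ⊆ l.foldr (· ∪ ·) ∅ := by
  induction l with
  | nil => simp at hX
  | cons Y l ih =>
    rcases hX with _ | hX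
    · exact Set.subset_union_left
    · exact (ih (by assumption)).trans Set.subset_union_right

lemma mem_starSem {A : Set (Set STriple)} {S : Set STriple} (hS : S.Finite)
    (h : ∀ t ∈ S, ({t} : Set STriple) ∈ A) : S ∈ starSem A := by
  revert h
  refine Set.Finite.induction_on
    (motive := fun S _ => (∀ t ∈ S, ({t} : Set STriple) ∈ A) → S ∈ starSem A) S hS ?_ ?_
  · intro _; exact ⟨[], by simp, by simp, by simp⟩
  · intro a s ha hs ih h
    obtain ⟨l, hl, hpw, hfold⟩ := ih (fun t ht => h t (Set.mem_insert_of_mem _ ht))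
    refine ⟨{a} :: l, ?_, ?_, ?_⟩
    · intro X hX
      rcases hX with _ | hX
      · exact h a (Set.mem_insert _ _)
      · exact hl X (by assumption)
    · refine List.Pairwise.cons (fun X hX => ?_) hpw
      apply Set.eq_empty_iff_forall_notMem.mpr
      rintro x ⟨hx1, hx2⟩
      rw [Set.mem_singleton_iff] at hx1
      subst hx1
      exact ha (hfold ▸ subset_foldr hX hx2)
    · rw [List.foldr_cons, ← hfold]
      exact Set.insert_eq a s

lemma sub_star_helper (G : CommonGraph) (v : NV) (b : Bool) (S : Set STriple)
    (hsub : S ⊆ neighPM G v) (hb : ∀ s ∈ S, s.inv = b) :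
    S ∈ starSem (negSem v (∅ : Finset PK) b) := by
  refine mem_starSem ((neighPM_finite G v).subset hsub) (fun t ht => ?_)
  obtain ⟨hwt, hsrc⟩ := neighPM_spec (hsub ht)
  exact ⟨t, hwt, hsrc, hb t ht, by simp, rfl⟩

lemma shexTop_sat {VT : Type} (semVT : VT → Set GValue) (G : CommonGraph) (v : NV) :
    shexSat semVT G v (shexTop (VT := VT)) := by
  show neighPM G v ∈ seqSem _ _
  refine ⟨{s | s ∈ neighPM G v ∧ s.inv = true}, ⟨∅, rfl,
    {s | s ∈ neighPM G v ∧ s.inv = true}, ?_, by simp, by simp⟩,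
    {s | s ∈ neighPM G v ∧ s.inv = false}, ?_, ?_, ?_⟩
  · exact sub_star_helper G v true _ (fun s hs => hs.1) (fun s hs => hs.2)
  · exact sub_star_helper G v false _ (fun s hs => hs.1) (fun s hs => hs.2)
  · apply Set.eq_empty_iff_forall_notMem.mpr
    rintro s ⟨⟨-, h1⟩, -, h2⟩
    rw [h1] at h2
    exact absurd h2 (by simp)
  · apply Set.Subset.antisymm
    · intro s hs
      rcases Bool.eq_false_or_eq_true s.inv with h | h
      · exact Set.mem_union_left _ ⟨hs, h⟩
      · exact Set.mem_union_right _ ⟨hs, h⟩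
    · rintro s (⟨hs, -⟩ | ⟨hs, -⟩) <;> exact hs

lemma sat_neighOpen_single {VT : Type} (semVT : VT → Set GValue) (G : CommonGraph) (v : NV)
    (q : PK) (φ : ShExShape VT) :
    shexSat semVT G v (.neighOpen (.fwd q φ) ∅ ∅) ↔
      ∃ t ∈ neighPM G v, t.inv = false ∧ t.sym = q ∧ shexSat semVT G t.tgt φ := by
  constructor
  · intro h
    obtain ⟨T12, ⟨T1, hT1, T2, hT2, -, rfl⟩, T3, hT3, -, hEq⟩ := h
    obtain ⟨t, hwt, hsrc, hsym, hinv, hsat, rfl⟩ := hT1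
    refine ⟨t, ?_, hinv, hsym, hsat⟩
    rw [hEq]
    exact Set.mem_union_left _ (Set.mem_union_left _ rfl)
  · rintro ⟨t, htmem, hinv, hsym, hsat⟩
    obtain ⟨hwt, hsrc⟩ := neighPM_spec htmem
    refine ⟨{t} ∪ {s | s ∈ neighPM G v ∧ s.inv = true},
      ⟨{t}, ⟨t, hwt, hsrc, hsym, hinv, hsat, rfl⟩,
       {s | s ∈ neighPM G v ∧ s.inv = true},
        sub_star_helper G v true _ (fun s hs => hs.1) (fun s hs => hs.2), ?_, rfl⟩,
      {s | s ∈ neighPM G v ∧ s.inv = false ∧ s ≠ t},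
        sub_star_helper G v false _ (fun s hs => hs.1) (fun s hs => hs.2.1), ?_, ?_⟩
    · apply Set.eq_empty_iff_forall_notMem.mpr
      rintro s ⟨hs1, -, hs3⟩
      rw [Set.mem_singleton_iff] at hs1
      subst hs1
      rw [hinv] at hs3
      exact absurd hs3 (by simp)
    · apply Set.eq_empty_iff_forall_notMem.mpr
      rintro s ⟨hs1, -, hsf, hne⟩
      rcases hs1 with hs1 | ⟨-, hs2⟩
      · rw [Set.mem_singleton_iff] at hs1
        exact hne hs1
      · rw [hs2] at hsf
        exact absurd hsf (by simp)
    · apply Set.Subset.antisymm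
      · intro s hs
        by_cases hst : s = t
        · exact Set.mem_union_left _ (Set.mem_union_left _ hst)
        · rcases Bool.eq_false_or_eq_true s.inv with hb | hb
          · exact Set.mem_union_left _ (Set.mem_union_right _ ⟨hs, hb⟩)
          · exact Set.mem_union_right _ ⟨hs, hb, hst⟩
      · rintro s ((hs | ⟨hs, -⟩) | ⟨hs, -⟩)
        · rw [Set.mem_singleton_iff] at hs
          rw [hs]; exact htmem
        · exact hs
        · exact hs

/-- The translation of a closed content type into a ShEx shape. -/
def shapeOf {VT : Type} : CCType VT → ShExShape VT
  | .emp => shexTop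
  | .single k τ => .neighOpen (.fwd (Sum.inr k) (.testT τ)) ∅ ∅
  | .band ν₁ ν₂ => .and (shapeOf ν₁) (shapeOf ν₂)
  | .bor ν₁ ν₂ => .or (shapeOf ν₁) (shapeOf ν₂)

/-- Monotone satisfaction predicate for closed content types. -/
def Dsem {VT : Type} (semVT : VT → Set GValue) : CCType VT → Set (GKey × GValue) → Prop
  | .emp, _ => True
  | .single k τ, r => ∃ w ∈ semVT τ, (k, w) ∈ r
  | .band ν₁ ν₂, r => Dsem semVT ν₁ r ∧ Dsem semVT ν₂ r
  | .bor ν₁ ν₂, r => Dsem semVT ν₁ r ∨ Dsem semVT ν₂ r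

lemma Dsem_iff {VT : Type} (semVT : VT → Set GValue) (ν : CCType VT)
    {r : Set (GKey × GValue)} (hr : IsRecord r) :
    Dsem semVT ν r ↔ ∃ r₁ ∈ ctSem semVT ν.toCT, r₁ ⊆ r := by
  induction ν with
  | emp =>
    simp only [Dsem, CCType.toCT, ctSem, true_iff]
    exact ⟨∅, rfl, Set.empty_subset r⟩
  | single k τ =>
    simp only [Dsem, CCType.toCT, ctSem, Set.mem_setOf_eq]
    constructor
    · rintro ⟨w, hw, hmem⟩
      exact ⟨{(k, w)}, ⟨w, hw, rfl⟩, by simpa using hmem⟩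
    · rintro ⟨r₁, ⟨w, hw, rfl⟩, hsub⟩
      exact ⟨w, hw, hsub rfl⟩
  | band ν₁ ν₂ ih₁ ih₂ =>
    simp only [Dsem, CCType.toCT, ctSem, Set.mem_setOf_eq, ih₁, ih₂]
    constructor
    · rintro ⟨⟨r₁, h₁, hs₁⟩, ⟨r₂, h₂, hs₂⟩⟩
      exact ⟨r₁ ∪ r₂, ⟨isRecord_subset hr (Set.union_subset hs₁ hs₂), r₁, h₁, r₂, h₂, rfl⟩,
        Set.union_subset hs₁ hs₂⟩
    · rintro ⟨r₀, ⟨-, r₁, h₁, r₂, h₂, rfl⟩, hsub⟩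
      exact ⟨⟨r₁, h₁, Set.subset_union_left.trans hsub⟩,
        ⟨r₂, h₂, Set.subset_union_right.trans hsub⟩⟩
  | bor ν₁ ν₂ ih₁ ih₂ =>
    simp only [Dsem, CCType.toCT, ctSem, ih₁, ih₂]
    constructor
    · rintro (⟨r₁, h₁, hs⟩ | ⟨r₁, h₁, hs⟩)
      · exact ⟨r₁, Or.inl h₁, hs⟩
      · exact ⟨r₁, Or.inr h₁, hs⟩
    · rintro ⟨r₁, h₁ | h₁, hs⟩
      · exact Or.inl ⟨r₁, h₁, hs⟩
      · exact Or.inr ⟨r₁, h₁, hs⟩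

lemma shapeOf_correct {VT : Type} (semVT : VT → Set GValue) (ν : CCType VT)
    (G : CommonGraph) (v : GNode) :
    shexSat semVT G (Sum.inl v) (shapeOf ν) ↔ Dsem semVT ν (content G v) := by
  induction ν with
  | emp => simpa [shapeOf, Dsem] using shexTop_sat semVT G (Sum.inl v)
  | single k τ =>
    rw [shapeOf, sat_neighOpen_single]
    constructor
    · rintro ⟨⟨a, q, b, c⟩, hmem, hinv, hsym, hsat⟩
      simp only at hinv hsym; subst hinv; subst hsym
      rcases hmem with ⟨-, hsrc, hrel⟩ | ⟨habs, -, -⟩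
      · simp only at hsrc; subst hsrc
        rcases c with u' | w'
        · exact absurd hrel (by simp [tripleRel])
        · obtain ⟨w, hw, hw'⟩ := hsat
          have hww : w' = w := by simpa using hw
          subst hww
          exact ⟨w', hw', hrel⟩
      · exact absurd habs (by simp)
    · rintro ⟨w, hw, hmem⟩
      exact ⟨⟨Sum.inl v, Sum.inr k, false, Sum.inr w⟩,
        Or.inl ⟨rfl, rfl, hmem⟩, rfl, rfl, ⟨w, rfl, hw⟩⟩
  | band ν₁ ν₂ ih₁ ih₂ =>
    show (shexSat _ _ _ _ ∧ shexSat _ _ _ _) ↔ _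
    rw [ih₁, ih₂]; rfl
  | bor ν₁ ν₂ ih₁ ih₂ =>
    show (shexSat _ _ _ _ ∨ shexSat _ _ _ _) ↔ _
    rw [ih₁, ih₂]; rfl

/-- For each open content type `θ` there is a ShEx shape `φ_θ` such that
for every common graph `G` and node `v` of `G`: `G, v ⊨ φ_θ` iff `ρ(v) ∈ ⟦θ⟧`. -/
theorem open_content_type_expressible_in_shex
    (VT : Type) (semVT : VT → Set GValue) (θ : OpenCT VT) :
    ∃ φ : ShExShape VT, ∀ (G : CommonGraph) (v : GNode), v ∈ nodesSet G →
      (shexSat semVT G (Sum.inl v) φ ↔ content G v ∈ ctSem semVT θ.toCT) := by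
  cases θ with
  | top =>
    refine ⟨shexTop, fun G v _ => ?_⟩
    simp only [OpenCT.toCT, ctSem, Set.mem_setOf_eq]
    exact ⟨fun _ => content_isRecord G v, fun _ => shexTop_sat semVT G (Sum.inl v)⟩
  | opn ν =>
    refine ⟨shapeOf ν, fun G v _ => ?_⟩
    rw [shapeOf_correct, Dsem_iff semVT ν (content_isRecord G v)]
    simp only [OpenCT.toCT, ctSem, Set.mem_setOf_eq]
    constructor
    · rintro ⟨r₁, h₁, hsub⟩
      exact ⟨content_isRecord G v, r₁, h₁, content G v, content_isRecord G v,
        (Set.union_eq_right.mpr hsub).symm⟩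
    · rintro ⟨-, r₁, h₁, r₂, -, hEq⟩
      exact ⟨r₁, h₁, hEq ▸ Set.subset_union_left⟩
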